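/- Let G be a strongly topological gyrogroup with symmetric neighborhood base 𝒰 at 0 and H a neutral admissible subgyrogroup generated from 𝒰. If the quotient space G/H is Fréchet-Urysohn, then G/H is a strong α₄-space at π(0): for any doubly-indexed set {x_{m,n} : m,n ∈ ℕ} ⊆ G/H with lim_{n→∞} x_{m,n} = π(0) for each m, there exist strictly increasing sequences (i_k), (j_k) of natural numbers with lim_{k→∞} x_{i_k, j_k} = π(0). -/

import Mathlib

open Filter Topology

class Gyrogroup (G : Type*) where
  add : G → G → G
  zero : G
  neg : G → G
  gyr : G → G → G → G
  zero_add : ∀ a, add zero a = a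
  add_zero : ∀ a, add a zero = a
  zero_unique : ∀ z : G, (∀ a, add z a = a ∧ add a z = a) → z = zero
  neg_add : ∀ a, add (neg a) a = zero
  add_neg : ∀ a, add a (neg a) = zero
  neg_unique : ∀ x y : G, add y x = zero → add x y = zero → y = neg x
  gyr_add : ∀ x y a b, gyr x y (add a b) = add (gyr x y a) (gyr x y b)
  gyr_bijective : ∀ x y, Function.Bijective (gyr x y)
  gyroassoc : ∀ x y z, add x (add y z) = add (add x y) (gyr x y z)
  loop : ∀ x y, gyr (add x y) y = gyr x y

namespace Gyrogroup

variable {G : Type*} [Gyrogroup G]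

/-- Elementwise sum of two subsets: `A ⊕ B = {a ⊕ b : a ∈ A, b ∈ B}`. -/
def sAdd (A B : Set G) : Set G := Set.image2 add A B

/-- Elementwise inverse of a subset: `⊖A = {⊖a : a ∈ A}`. -/
def sNeg (A : Set G) : Set G := neg '' A

/-- The left coset `x ⊕ H`. -/
def lcoset (x : G) (H : Set G) : Set G := (fun h => add x h) '' H

/-- The setoid identifying points with equal left cosets; `Quotient` of it is `G/H`. -/
def cosetSetoid (G : Type*) [Gyrogroup G] (H : Set G) : Setoid G :=
  ⟨fun x y => lcoset x H = lcoset y H,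
    ⟨fun _ => rfl, fun h => h.symm, fun h1 h2 => h1.trans h2⟩⟩

end Gyrogroup

/-- A (Hausdorff) topological gyrogroup: `⊕` is jointly continuous and `⊖` is continuous. -/
class TopologicalGyrogroup (G : Type*) [TopologicalSpace G] extends Gyrogroup G where
  t2 : T2Space G
  continuous_add : Continuous fun p : G × G => add p.1 p.2
  continuous_neg : Continuous neg

/-!
Left translations `π a ↦ π (g ⊕ a)` are homeomorphisms of `G/H` acting transitively, and
neutrality of `H` makes them uniform at `π 0`: if `π (g k) → π 0` and `b k → π 0`, then translating
`b k` by `⊖g k` still gives a sequence converging to `π 0`. As `H = ⋂ Uₙ`, the point `π 0` is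
separated from every other point, so `G/H` is Hausdorff.

Given rows `x m → π 0` with `π 0` not isolated, choose `π (g m) → π 0` with `π (g m) ≠ π 0`. The
translated rows `g m ⊕ x m` converge to the points `π (g m)`, so `π 0` lies in the closure of their
entries, and the Fréchet–Urysohn property yields a sequence of entries converging to `π 0`. Since
each translated row stays away from `π 0`, its row index tends to infinity; translating back by
`⊖g m` gives the required diagonal of `x`.
-/

open Set

section StrongAlphaFour

variable {X : Type*} [TopologicalSpace X]

def IsStrongAlphaFourAt (p : X) : Prop :=
  ∀ x : ℕ → ℕ → X, (∀ m, Tendsto (fun n => x m n) atTop (𝓝 p)) →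
    ∃ i j : ℕ → ℕ, StrictMono i ∧ StrictMono j ∧ Tendsto (fun k => x (i k) (j k)) atTop (𝓝 p)

theorem isStrongAlphaFourAt_of_isOpen_singleton {p : X} (hp : IsOpen {p}) :
    IsStrongAlphaFourAt p := by
  intro x hx
  obtain ⟨j, hj, hxj⟩ := extraction_forall_of_eventually fun m => hx m (hp.mem_nhds rfl)
  exact ⟨id, j, strictMono_id, hj, tendsto_const_nhds.congr fun k => (hxj k).symm⟩

theorem notMem_closure_range_diff_singleton [T2Space X] {f : ℕ → X} {p q : X}
    (hf : Tendsto f atTop (𝓝 q)) (hpq : p ≠ q) : p ∉ closure (range f \ {p}) := by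
  obtain ⟨U, hU, V, hV, hUV⟩ := Filter.disjoint_iff.1 (disjoint_nhds_nhds.2 hpq)
  obtain ⟨N, hN⟩ := eventually_atTop.1 (hf hV)
  have hF : (f '' Iio N \ {p}).Finite := ((finite_Iio N).image f).sdiff
  intro hcl
  obtain ⟨_, ⟨hU', hF'⟩, ⟨n, rfl⟩, hp⟩ := mem_closure_iff_nhds.1 hcl _
    (inter_mem hU (hF.isClosed.compl_mem_nhds fun h => h.2 rfl))
  rcases lt_or_ge n N with hn | hn
  · exact hF' ⟨mem_image_of_mem f hn, hp⟩
  · exact disjoint_left.1 hUV hU' (hN n hn)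

theorem exists_strictMono_tendsto_diag [T2Space X] [FrechetUrysohnSpace X] {p : X}
    {q : ℕ → X} (hq : Tendsto q atTop (𝓝 p)) (hqp : ∀ m, q m ≠ p) {a : ℕ → ℕ → X}
    (ha : ∀ m, Tendsto (a m) atTop (𝓝 (q m))) :
    ∃ i j : ℕ → ℕ, StrictMono i ∧ StrictMono j ∧ Tendsto (fun k => a (i k) (j k)) atTop (𝓝 p) := by
  set A := {y | ∃ m n, m ≤ n ∧ a m n = y} \ {p}
  have hqA : ∀ m, q m ∈ closure A := fun m => by
    have hrow := (ha m).comp (tendsto_add_atTop_nat m)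
    exact mem_closure_of_tendsto hrow <| (hrow.eventually_ne (hqp m)).mono fun n hn =>
      ⟨⟨m, n + m, Nat.le_add_left m n, rfl⟩, hn⟩
  have hpA : p ∈ closure A := closure_closure (s := A) ▸ mem_closure_of_tendsto hq (.of_forall hqA)
  obtain ⟨α, hαA, hα⟩ := mem_closure_iff_seq_limit.1 hpA
  choose u v huv hαuv using fun j => (hαA j).1
  -- each row meets `A` in a set that stays away from `p`, so `α` leaves every row
  have hu_ne : ∀ m, ∀ᶠ j in atTop, u j ≠ m := fun m => by
    refine not_frequently.1 fun hfreq => notMem_closure_range_diff_singleton (ha m) (hqp m).symm ?_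
    refine mem_closure_of_frequently_of_tendsto (hfreq.mono fun j hj => ⟨⟨v j, ?_⟩, (hαA j).2⟩) hα
    rw [← hj, hαuv]
  have hu : Tendsto u atTop atTop := by
    have : map u atTop ≤ cofinite := le_cofinite_iff_eventually_ne.2 hu_ne
    rwa [Nat.cofinite_eq_atTop] at this
  obtain ⟨φ, hφ, huφ⟩ := strictMono_subseq_of_tendsto_atTop hu
  obtain ⟨ψ, hψ, hvψ⟩ :=
    strictMono_subseq_of_tendsto_atTop ((tendsto_atTop_mono huv hu).comp hφ.tendsto_atTop)
  refine ⟨u ∘ φ ∘ ψ, v ∘ φ ∘ ψ, huφ.comp hψ, hvψ, ?_⟩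
  simpa only [Function.comp_def, hαuv] using hα.comp (hφ.comp hψ).tendsto_atTop

theorem t2Space_of_homogeneous {ι : Type*} {p : X} (L : ι → X ≃ₜ X) (hL : ∀ y, ∃ g, L g p = y)
    (hp : ∀ y ≠ p, Disjoint (𝓝 p) (𝓝 y)) : T2Space X := by
  refine t2Space_iff_disjoint_nhds.2 fun x y hxy => ?_
  obtain ⟨g, rfl⟩ := hL x
  have h := hp ((L g).symm y) fun h => hxy ((L g).symm_apply_eq.1 h).symm
  rwa [← disjoint_map (L g).injective, (L g).map_nhds_eq, (L g).map_nhds_eq,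
    Homeomorph.apply_symm_apply] at h

theorem isStrongAlphaFourAt_of_homogeneous [T2Space X] [FrechetUrysohnSpace X] {ι : Type*}
    {p : X} (L : ι → X ≃ₜ X) (hL : ∀ y, ∃ g, L g p = y)
    (hback : ∀ (g : ℕ → ι) (b : ℕ → X), Tendsto (fun k => L (g k) p) atTop (𝓝 p) →
      Tendsto b atTop (𝓝 p) → Tendsto (fun k => (L (g k)).symm (b k)) atTop (𝓝 p)) :
    IsStrongAlphaFourAt p := by
  by_cases hp : IsOpen {p}
  · exact isStrongAlphaFourAt_of_isOpen_singleton hp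
  intro x hx
  rw [isOpen_singleton_iff_punctured_nhds, ← ne_eq, ← neBot_iff,
    ← mem_closure_iff_nhdsWithin_neBot] at hp
  obtain ⟨t, htp, ht⟩ := mem_closure_iff_seq_limit.1 hp
  choose g hg using fun k => hL (t k)
  have hrow : ∀ m, Tendsto (fun n => L (g m) (x m n)) atTop (𝓝 (t m)) := fun m =>
    hg m ▸ ((L (g m)).continuous.tendsto p).comp (hx m)
  obtain ⟨i, j, hi, hj, hij⟩ := exists_strictMono_tendsto_diag ht htp hrow
  refine ⟨i, j, hi, hj, ?_⟩
  simpa only [Function.comp_apply, Homeomorph.symm_apply_apply] using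
    hback (g ∘ i) _ (by simpa only [Function.comp_def, hg] using ht.comp hi.tendsto_atTop) hij

end StrongAlphaFour

namespace Gyrogroup

variable {G : Type*} [Gyrogroup G]

theorem add_left_cancel {a b c : G} (h : add a b = add a c) : b = c := by
  apply (gyr_bijective (neg a) a).1
  rw [← zero_add (gyr (neg a) a b), ← zero_add (gyr (neg a) a c), ← neg_add a, ← gyroassoc,
    ← gyroassoc, h]

theorem gyr_zero_left (a z : G) : gyr zero a z = z :=
  add_left_cancel (by simpa only [zero_add] using (gyroassoc zero a z).symm)

theorem gyr_neg_self (a z : G) : gyr (neg a) a z = z := by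
  rw [← loop (neg a) a, neg_add, gyr_zero_left]

theorem gyr_self_neg (a z : G) : gyr a (neg a) z = z := by
  rw [← loop a (neg a), add_neg, gyr_zero_left]

theorem neg_add_cancel_left (a b : G) : add (neg a) (add a b) = b := by
  rw [gyroassoc, neg_add, zero_add, gyr_neg_self]

theorem add_neg_cancel_left (a b : G) : add a (add (neg a) b) = b := by
  rw [gyroassoc, add_neg, zero_add, gyr_self_neg]

theorem eq_neg_of_add_eq_zero {a b : G} (h : add a b = zero) : b = neg a :=
  add_left_cancel (h.trans (add_neg a).symm)

theorem neg_neg (a : G) : neg (neg a) = a :=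
  (eq_neg_of_add_eq_zero (neg_add a)).symm

theorem neg_add_rev (a b : G) : neg (add a b) = gyr a b (add (neg b) (neg a)) :=
  (eq_neg_of_add_eq_zero (by rw [← gyroassoc, add_neg_cancel_left, add_neg])).symm

theorem add_add_gyr_neg (a b : G) : add (add a b) (gyr a b (neg b)) = a := by
  rw [← gyroassoc, add_neg, add_zero]

def IsGyrInvariant (A : Set G) : Prop := ∀ x y : G, gyr x y '' A = A

theorem IsGyrInvariant.gyr_mem {A : Set G} (hA : IsGyrInvariant A) (x y : G) {a : G}
    (ha : a ∈ A) : gyr x y a ∈ A :=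
  hA x y ▸ mem_image_of_mem _ ha

theorem IsGyrInvariant.exists_gyr_eq {A : Set G} (hA : IsGyrInvariant A) (x y : G) {a : G}
    (ha : a ∈ A) : ∃ a' ∈ A, gyr x y a' = a := by
  rwa [← hA x y] at ha

theorem sAdd_subset_sAdd {A A' B B' : Set G} (hA : A ⊆ A') (hB : B ⊆ B') :
    sAdd A B ⊆ sAdd A' B' :=
  image2_subset hA hB

theorem sAdd_sAdd_subset {A B C : Set G} (hC : IsGyrInvariant C) :
    sAdd (sAdd A B) C ⊆ sAdd A (sAdd B C) := by
  rintro _ ⟨_, ⟨a, ha, b, hb, rfl⟩, c, hc, rfl⟩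
  obtain ⟨c', hc', rfl⟩ := hC.exists_gyr_eq a b hc
  exact ⟨a, ha, add b c', ⟨b, hb, c', hc', rfl⟩, gyroassoc a b c'⟩

theorem sNeg_sAdd_subset {A B : Set G} (hA : IsGyrInvariant A) (hAneg : sNeg A ⊆ A)
    (hB : IsGyrInvariant B) (hBneg : sNeg B ⊆ B) : sNeg (sAdd A B) ⊆ sAdd B A := by
  rintro _ ⟨_, ⟨a, ha, b, hb, rfl⟩, rfl⟩
  rw [neg_add_rev, gyr_add]
  exact ⟨_, hB.gyr_mem a b (hBneg ⟨b, hb, rfl⟩), _, hA.gyr_mem a b (hAneg ⟨a, ha, rfl⟩), rfl⟩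

structure IsInvariantSubgyrogroup (H : Set G) : Prop where
  zero_mem : zero ∈ H
  neg_mem {h : G} : h ∈ H → neg h ∈ H
  add_mem {a b : G} : a ∈ H → b ∈ H → add a b ∈ H
  isGyrInvariant : IsGyrInvariant H

theorem IsInvariantSubgyrogroup.sNeg_subset {H : Set G} (hH : IsInvariantSubgyrogroup H) :
    sNeg H ⊆ H := by
  rintro _ ⟨h, hh, rfl⟩
  exact hH.neg_mem hh

section Chain

variable {U : ℕ → Set G}

theorem add_mem_of_mem_succ (h0 : ∀ n, zero ∈ U n)
    (hchain : ∀ n, sAdd (U (n + 1)) (sAdd (U (n + 1)) (U (n + 1))) ⊆ U n) {n : ℕ} {a b : G}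
    (ha : a ∈ U (n + 1)) (hb : b ∈ U (n + 1)) :
    add a b ∈ U n :=
  hchain n ⟨a, ha, add b zero, ⟨b, hb, zero, h0 _, rfl⟩, by rw [add_zero]⟩

theorem isInvariantSubgyrogroup_iInter (h0 : ∀ n, zero ∈ U n)
    (hchain : ∀ n, sAdd (U (n + 1)) (sAdd (U (n + 1)) (U (n + 1))) ⊆ U n)
    (hneg : ∀ n, sNeg (U n) ⊆ U n)
    (hgyr : ∀ n, IsGyrInvariant (U n)) : IsInvariantSubgyrogroup (⋂ n, U n) where
  zero_mem := mem_iInter.2 h0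
  neg_mem hh := mem_iInter.2 fun n => hneg n ⟨_, mem_iInter.1 hh n, rfl⟩
  add_mem ha hb := mem_iInter.2 fun n =>
    add_mem_of_mem_succ h0 hchain (mem_iInter.1 ha _) (mem_iInter.1 hb _)
  isGyrInvariant x y := by
    rw [image_iInter (gyr_bijective x y)]
    exact iInter_congr fun n => hgyr n x y

theorem sAdd_iInter_sAdd_subset (h0 : ∀ n, zero ∈ U n)
    (hchain : ∀ n, sAdd (U (n + 1)) (sAdd (U (n + 1)) (U (n + 1))) ⊆ U n) (n : ℕ) :
    sAdd (⋂ n, U n) (sAdd (U (n + 2)) (U (n + 2))) ⊆ U n := by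
  rintro _ ⟨h, hh, _, ⟨v, hv, v', hv', rfl⟩, rfl⟩
  exact add_mem_of_mem_succ h0 hchain (mem_iInter.1 hh _) (add_mem_of_mem_succ h0 hchain hv hv')

end Chain

section Cosets

variable {H : Set G}

local notation "π" => Quotient.mk (cosetSetoid G H)

theorem mem_lcoset_comm (hH : IsInvariantSubgyrogroup H) {a b : G} (hab : a ∈ lcoset b H) :
    b ∈ lcoset a H := by
  obtain ⟨h, hh, rfl⟩ := hab
  exact ⟨gyr b h (neg h), hH.isGyrInvariant.gyr_mem _ _ (hH.neg_mem hh), add_add_gyr_neg b h⟩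

theorem lcoset_subset_of_mem (hH : IsInvariantSubgyrogroup H) {a b : G} (hab : a ∈ lcoset b H) :
    lcoset a H ⊆ lcoset b H := by
  obtain ⟨h, hh, rfl⟩ := hab
  rintro _ ⟨h', hh', rfl⟩
  obtain ⟨z, hz, rfl⟩ := hH.isGyrInvariant.exists_gyr_eq b h hh'
  exact ⟨add h z, hH.add_mem hh hz, gyroassoc b h z⟩

theorem mk_eq_mk_iff (hH : IsInvariantSubgyrogroup H) {a b : G} :
    π a = π b ↔ a ∈ lcoset b H := by
  refine Quotient.eq.trans ⟨fun hab => ?_, fun hab => ?_⟩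
  · rw [← show lcoset a H = lcoset b H from hab]
    exact ⟨zero, hH.zero_mem, add_zero a⟩
  · exact (lcoset_subset_of_mem hH hab).antisymm (lcoset_subset_of_mem hH (mem_lcoset_comm hH hab))

theorem mk_add_of_mem (hH : IsInvariantSubgyrogroup H) (a : G) {h : G} (hh : h ∈ H) :
    π (add a h) = π a :=
  (mk_eq_mk_iff hH).2 ⟨h, hh, rfl⟩

theorem mk_eq_mk_zero_iff (hH : IsInvariantSubgyrogroup H) {b : G} : π b = π zero ↔ b ∈ H := by
  simp only [mk_eq_mk_iff hH, lcoset, zero_add, image_id']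

theorem mk_add_left_congr (hH : IsInvariantSubgyrogroup H) (g : G) {a b : G} (hab : π a = π b) :
    π (add g a) = π (add g b) := by
  obtain ⟨h, hh, rfl⟩ := (mk_eq_mk_iff hH).1 hab
  rw [gyroassoc]
  exact mk_add_of_mem hH _ (hH.isGyrInvariant.gyr_mem g b hh)

end Cosets

end Gyrogroup

namespace Gyrogroup

variable {G : Type*} [TopologicalSpace G] [TopologicalGyrogroup G] {𝒰 : Set (Set G)} {H : Set G}

local notation "π" => Quotient.mk (cosetSetoid G H)

theorem continuous_add_left (g : G) : Continuous (add g) :=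
  TopologicalGyrogroup.continuous_add.comp (continuous_const.prodMk continuous_id)

theorem continuous_add_right (h : G) : Continuous fun a : G => add a h :=
  TopologicalGyrogroup.continuous_add.comp (continuous_id.prodMk continuous_const)

theorem isOpenMap_mk (hH : IsInvariantSubgyrogroup H) : IsOpenMap π := by
  intro W hW
  have hsat : π ⁻¹' (π '' W) = ⋃ h ∈ H, (fun a => add a h) ⁻¹' W := by
    ext a
    simp only [mem_preimage, mem_image, mem_iUnion]
    constructor
    · rintro ⟨w, hw, hwa⟩
      obtain ⟨h, hh, rfl⟩ := (mk_eq_mk_iff hH).1 hwa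
      exact ⟨h, hh, hw⟩
    · rintro ⟨h, hh, hW⟩
      exact ⟨add a h, hW, mk_add_of_mem hH a hh⟩
  show IsOpen (π ⁻¹' (π '' W))
  rw [hsat]
  exact isOpen_biUnion fun h _ => hW.preimage (continuous_add_right h)

def quotientAddLeft (hH : IsInvariantSubgyrogroup H) (g : G) :
    Quotient (cosetSetoid G H) ≃ₜ Quotient (cosetSetoid G H) where
  toFun := Quotient.lift (fun a => π (add g a)) fun _ _ hab =>
    mk_add_left_congr hH g (Quotient.sound hab)
  invFun := Quotient.lift (fun a => π (add (neg g) a)) fun _ _ hab =>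
    mk_add_left_congr hH (neg g) (Quotient.sound hab)
  left_inv := Quotient.ind fun a => congrArg π (neg_add_cancel_left g a)
  right_inv := Quotient.ind fun a => congrArg π (add_neg_cancel_left g a)
  continuous_toFun := continuous_quot_lift _ (continuous_quot_mk.comp (continuous_add_left g))
  continuous_invFun :=
    continuous_quot_lift _ (continuous_quot_mk.comp (continuous_add_left (neg g)))

theorem quotientAddLeft_mk (hH : IsInvariantSubgyrogroup H) (g a : G) :
    quotientAddLeft hH g (π a) = π (add g a) :=
  rfl

theorem quotientAddLeft_symm_mk (hH : IsInvariantSubgyrogroup H) (g a : G) :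
    (quotientAddLeft hH g).symm (π a) = π (add (neg g) a) :=
  rfl

theorem quotientAddLeft_mk_zero (hH : IsInvariantSubgyrogroup H) (g : G) :
    quotientAddLeft hH g (π zero) = π g := by
  rw [quotientAddLeft_mk, add_zero]

theorem exists_quotientAddLeft_mk_zero_eq (hH : IsInvariantSubgyrogroup H)
    (y : Quotient (cosetSetoid G H)) : ∃ g, quotientAddLeft hH g (π zero) = y :=
  ⟨y.out, by rw [quotientAddLeft_mk_zero, Quotient.out_eq]⟩

theorem exists_sAdd_self_subset (hbasis : (𝓝 (zero : G)).HasBasis (· ∈ 𝒰) id) {N : Set G}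
    (hN : N ∈ 𝓝 (zero : G)) : ∃ V ∈ 𝒰, sAdd V V ⊆ N := by
  have hadd : Tendsto (fun p : G × G => add p.1 p.2) (𝓝 zero ×ˢ 𝓝 zero) (𝓝 zero) := by
    rw [← nhds_prod_eq]
    simpa only [zero_add] using TopologicalGyrogroup.continuous_add.tendsto ((zero : G), (zero : G))
  obtain ⟨V, hV, hVN⟩ := hbasis.prod_self.mem_iff.1 (hadd hN)
  exact ⟨V, hV, image2_subset_iff.2 fun a ha b hb => hVN (mk_mem_prod ha hb)⟩

theorem tendsto_quotientAddLeft_symm (hbasis : (𝓝 (zero : G)).HasBasis (· ∈ 𝒰) id)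
    (hsym : ∀ U ∈ 𝒰, sNeg U = U) (hgyr : ∀ U ∈ 𝒰, IsGyrInvariant U)
    (hH : IsInvariantSubgyrogroup H)
    (hneutral : ∀ U : Set G, IsOpen U → zero ∈ U → ∃ V : Set G, IsOpen V ∧ zero ∈ V ∧
      sAdd H V ⊆ sAdd U H)
    {g : ℕ → G} {b : ℕ → Quotient (cosetSetoid G H)}
    (hg : Tendsto (fun k => π (g k)) atTop (𝓝 (π zero))) (hb : Tendsto b atTop (𝓝 (π zero))) :
    Tendsto (fun k => (quotientAddLeft hH (g k)).symm (b k)) atTop (𝓝 (π zero)) := by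
  rw [(nhds_basis_opens _).tendsto_right_iff]
  rintro O ⟨hO0, hO⟩
  obtain ⟨V, hVo, hV0, hHV⟩ := hneutral (π ⁻¹' O) (hO.preimage continuous_quot_mk) hO0
  have hsat : sAdd (π ⁻¹' O) H ⊆ π ⁻¹' O := by
    rintro _ ⟨a, ha, h, hh, rfl⟩
    rwa [mem_preimage, mk_add_of_mem hH a hh]
  obtain ⟨W, hW, hWV⟩ := exists_sAdd_self_subset hbasis (hVo.mem_nhds hV0)
  have hπW := (isOpenMap_mk hH).image_mem_nhds (hbasis.mem_of_mem hW)
  filter_upwards [hg hπW, hb hπW] with k ⟨v, hv, hvg⟩ ⟨v', hv', hv'b⟩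
  obtain ⟨h, hh, hgk⟩ := (mk_eq_mk_iff hH).1 hvg.symm
  have hnegW : neg (add v h) ∈ sAdd H W := sNeg_sAdd_subset (hgyr W hW) (hsym W hW).subset
    hH.isGyrInvariant hH.sNeg_subset ⟨_, ⟨v, hv, h, hh, rfl⟩, rfl⟩
  have hmem : add (neg (add v h)) v' ∈ sAdd H (sAdd W W) :=
    sAdd_sAdd_subset (hgyr W hW) ⟨_, hnegW, v', hv', rfl⟩
  rw [← hv'b, quotientAddLeft_symm_mk, ← hgk]
  exact hsat (hHV (sAdd_subset_sAdd subset_rfl hWV hmem))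

theorem exists_sAdd_subset_sAdd_swap (hbasis : (𝓝 (zero : G)).HasBasis (· ∈ 𝒰) id)
    (hsym : ∀ U ∈ 𝒰, sNeg U = U) (hgyr : ∀ U ∈ 𝒰, IsGyrInvariant U)
    (hH : IsInvariantSubgyrogroup H)
    (hneutral : ∀ U : Set G, IsOpen U → zero ∈ U → ∃ V : Set G, IsOpen V ∧ zero ∈ V ∧
      sAdd H V ⊆ sAdd U H)
    {U : Set G} (hU : U ∈ 𝒰) : ∃ V ∈ 𝒰, sAdd V H ⊆ sAdd H U := by
  obtain ⟨V₀, hV₀o, hV₀0, hHV₀⟩ := hneutral (interior U) isOpen_interior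
    (mem_interior_iff_mem_nhds.2 (hbasis.mem_of_mem hU))
  obtain ⟨V, hV, hVV₀⟩ := hbasis.mem_iff.1 (hV₀o.mem_nhds hV₀0)
  refine ⟨V, hV, fun a ha => ?_⟩
  have hneg : neg a ∈ sAdd H V := sNeg_sAdd_subset (hgyr V hV) (hsym V hV).subset
    hH.isGyrInvariant hH.sNeg_subset ⟨a, ha, rfl⟩
  have hneg' : neg a ∈ sAdd U H :=
    sAdd_subset_sAdd interior_subset subset_rfl (hHV₀ (sAdd_subset_sAdd subset_rfl hVV₀ hneg))
  simpa only [neg_neg] using sNeg_sAdd_subset (hgyr U hU) (hsym U hU).subset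
    hH.isGyrInvariant hH.sNeg_subset ⟨_, hneg', rfl⟩

theorem disjoint_nhds_mk_zero_mk (hbasis : (𝓝 (zero : G)).HasBasis (· ∈ 𝒰) id)
    (hsym : ∀ U ∈ 𝒰, sNeg U = U) (hgyr : ∀ U ∈ 𝒰, IsGyrInvariant U)
    (hH : IsInvariantSubgyrogroup H)
    (hneutral : ∀ U : Set G, IsOpen U → zero ∈ U → ∃ V : Set G, IsOpen V ∧ zero ∈ V ∧
      sAdd H V ⊆ sAdd U H)
    {V : Set G} (hV : V ∈ 𝒰) {b : G} (hb : b ∉ sAdd H (sAdd V V)) :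
    Disjoint (𝓝 (π zero)) (𝓝 (π b)) := by
  obtain ⟨V', hV', hV'H⟩ := exists_sAdd_subset_sAdd_swap hbasis hsym hgyr hH hneutral hV
  have hπ := isOpenMap_mk hH
  refine Filter.disjoint_iff.2 ⟨π '' V', hπ.image_mem_nhds (hbasis.mem_of_mem hV'),
    quotientAddLeft hH b '' (π '' V), ?_, ?_⟩
  · rw [← quotientAddLeft_mk_zero hH b]
    exact (quotientAddLeft hH b).isOpenMap.image_mem_nhds (hπ.image_mem_nhds (hbasis.mem_of_mem hV))
  rw [disjoint_left]
  rintro _ ⟨v, hv, rfl⟩ ⟨_, ⟨w, hw, rfl⟩, hvw⟩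
  obtain ⟨h, hh, hbw⟩ := (mk_eq_mk_iff hH).1 hvw
  have hb' : b = add (add v h) (gyr b w (neg w)) := by
    rw [show add v h = add b w from hbw, add_add_gyr_neg]
  refine hb (hb' ▸ sAdd_sAdd_subset (hgyr V hV) ⟨_, hV'H ⟨v, hv, h, hh, rfl⟩, _,
    (hgyr V hV).gyr_mem b w ((hsym V hV).subset ⟨w, hw, rfl⟩), rfl⟩)

theorem isInvariantSubgyrogroup_iInter_of_hasBasis
    (hbasis : (𝓝 (zero : G)).HasBasis (· ∈ 𝒰) id) (hsym : ∀ U ∈ 𝒰, sNeg U = U)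
    (hgyr : ∀ U ∈ 𝒰, IsGyrInvariant U) {U : ℕ → Set G} (hmem : ∀ n, U n ∈ 𝒰)
    (hchain : ∀ n, sAdd (U (n + 1)) (sAdd (U (n + 1)) (U (n + 1))) ⊆ U n) :
    IsInvariantSubgyrogroup (⋂ n, U n) :=
  isInvariantSubgyrogroup_iInter (fun n => mem_of_mem_nhds (hbasis.mem_of_mem (hmem n))) hchain
    (fun n => (hsym _ (hmem n)).subset) fun n => hgyr _ (hmem n)

theorem t2Space_quotient_iInter (hbasis : (𝓝 (zero : G)).HasBasis (· ∈ 𝒰) id)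
    (hsym : ∀ U ∈ 𝒰, sNeg U = U) (hgyr : ∀ U ∈ 𝒰, IsGyrInvariant U) {U : ℕ → Set G}
    (hmem : ∀ n, U n ∈ 𝒰)
    (hchain : ∀ n, sAdd (U (n + 1)) (sAdd (U (n + 1)) (U (n + 1))) ⊆ U n)
    (hneutral : ∀ W : Set G, IsOpen W → zero ∈ W → ∃ V : Set G, IsOpen V ∧ zero ∈ V ∧
      sAdd (⋂ n, U n) V ⊆ sAdd W (⋂ n, U n)) :
    T2Space (Quotient (cosetSetoid G (⋂ n, U n))) := by
  have h0 : ∀ n, zero ∈ U n := fun n => mem_of_mem_nhds (hbasis.mem_of_mem (hmem n))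
  have hH := isInvariantSubgyrogroup_iInter_of_hasBasis hbasis hsym hgyr hmem hchain
  refine t2Space_of_homogeneous (quotientAddLeft hH) (exists_quotientAddLeft_mk_zero_eq hH)
    fun y hy => ?_
  rw [← Quotient.out_eq y] at hy ⊢
  obtain ⟨n, hn⟩ : ∃ n, y.out ∉ U n := by
    simpa only [mem_iInter, not_forall] using mt (mk_eq_mk_zero_iff hH).2 hy
  exact disjoint_nhds_mk_zero_mk hbasis hsym hgyr hH hneutral (hmem (n + 2))
    fun hy' => hn (sAdd_iInter_sAdd_subset h0 hchain n hy')

end Gyrogroup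

theorem quotient_frechetUrysohn_strong_alpha4_general {G : Type*} [TopologicalSpace G]
    [TopologicalGyrogroup G]
(𝒰 : Set (Set G))
    (hbasis : (𝓝 (Gyrogroup.zero : G)).HasBasis (fun U : Set G => U ∈ 𝒰) id)
    (hsym : ∀ U ∈ 𝒰, Gyrogroup.sNeg U = U)
    (hgyr : ∀ U ∈ 𝒰, ∀ x y : G, Gyrogroup.gyr x y '' U = U)
    (Useq : ℕ → Set G) (hmem : ∀ n, Useq n ∈ 𝒰)
    (hchain : ∀ n : ℕ, Gyrogroup.sAdd (Useq (n + 1))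
      (Gyrogroup.sAdd (Useq (n + 1)) (Useq (n + 1))) ⊆ Useq n)
    (H : Set G) (hH : H = ⋂ n, Useq n)
    (hneutral : ∀ U : Set G, IsOpen U → Gyrogroup.zero ∈ U →
      ∃ V : Set G, IsOpen V ∧ Gyrogroup.zero ∈ V ∧
        Gyrogroup.sAdd H V ⊆ Gyrogroup.sAdd U H)
    (hFU : FrechetUrysohnSpace (Quotient (Gyrogroup.cosetSetoid G H))) :
    ∀ x : ℕ → ℕ → Quotient (Gyrogroup.cosetSetoid G H),
      (∀ m : ℕ, Tendsto (fun n => x m n) atTop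
        (𝓝 (Quotient.mk (Gyrogroup.cosetSetoid G H) Gyrogroup.zero))) →
      ∃ i j : ℕ → ℕ, StrictMono i ∧ StrictMono j ∧
        Tendsto (fun k => x (i k) (j k)) atTop
          (𝓝 (Quotient.mk (Gyrogroup.cosetSetoid G H) Gyrogroup.zero)) := by
  subst hH
  have hH := Gyrogroup.isInvariantSubgyrogroup_iInter_of_hasBasis hbasis hsym hgyr hmem hchain
  have := Gyrogroup.t2Space_quotient_iInter hbasis hsym hgyr hmem hchain hneutral
  refine isStrongAlphaFourAt_of_homogeneous (Gyrogroup.quotientAddLeft hH)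
    (Gyrogroup.exists_quotientAddLeft_mk_zero_eq hH) fun g b hg hb => ?_
  simp only [Gyrogroup.quotientAddLeft_mk_zero] at hg
  exact Gyrogroup.tendsto_quotientAddLeft_symm hbasis hsym hgyr hH hneutral hg hb

/-- If `H` is neutral and `G/H` is Fréchet–Urysohn, then `G/H` is a strong
α₄-space at `π(0)`. -/
theorem quotient_frechetUrysohn_strong_alpha4 {G : Type*} [TopologicalSpace G]
    [TopologicalGyrogroup G]
(𝒰 : Set (Set G))
    (hbasis : (𝓝 (Gyrogroup.zero : G)).HasBasis (fun U : Set G => U ∈ 𝒰) id)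
    (hsym : ∀ U ∈ 𝒰, Gyrogroup.sNeg U = U)
    (hgyr : ∀ U ∈ 𝒰, ∀ x y : G, Gyrogroup.gyr x y '' U = U)
    (Useq : ℕ → Set G) (hmem : ∀ n, Useq n ∈ 𝒰) (hopen : ∀ n, IsOpen (Useq n))
    (hchain : ∀ n : ℕ, Gyrogroup.sAdd (Useq (n + 1))
      (Gyrogroup.sAdd (Useq (n + 1)) (Useq (n + 1))) ⊆ Useq n)
    (H : Set G) (hH : H = ⋂ n, Useq n)
    (hneutral : ∀ U : Set G, IsOpen U → Gyrogroup.zero ∈ U →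
      ∃ V : Set G, IsOpen V ∧ Gyrogroup.zero ∈ V ∧
        Gyrogroup.sAdd H V ⊆ Gyrogroup.sAdd U H)
    (hFU : FrechetUrysohnSpace (Quotient (Gyrogroup.cosetSetoid G H))) :
    ∀ x : ℕ → ℕ → Quotient (Gyrogroup.cosetSetoid G H),
      (∀ m : ℕ, Tendsto (fun n => x m n) atTop
        (𝓝 (Quotient.mk (Gyrogroup.cosetSetoid G H) Gyrogroup.zero))) →
      ∃ i j : ℕ → ℕ, StrictMono i ∧ StrictMono j ∧
        Tendsto (fun k => x (i k) (j k)) atTop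
          (𝓝 (Quotient.mk (Gyrogroup.cosetSetoid G H) Gyrogroup.zero)) :=
  quotient_frechetUrysohn_strong_alpha4_general 𝒰 hbasis hsym hgyr Useq hmem hchain H hH hneutral
    hFU
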